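/- Under the canonical anticommutation relations with n ≥ 2, consider the Kitaev chain Hamiltonian at μ = 0 and Δ = −t, namely H := −t·∑_{j=0}^{n−2} (star (c (j+1)) * c j + star (c j) * c (j+1)) − t·∑_{j=0}^{n−2} (c j * c (j+1) + star (c (j+1)) * star (c j)) for t : ℂ. Then the two edge Majorana operators γ_{0,2} = Complex.I • (c 0 − star (c 0)) and γ_{n−1,1} = c (n−1) + star (c (n−1)) commute with H. (These are the unpaired Majorana zero modes of the nontrivial fermionic SPT phase, the 1d p-wave topological superconductor.) -/
import Mathlib

section
variable {A : Type*} [Ring A]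

lemma four_comm₁ (γ a a' b b' u : A)
    (ea : γ * a = -(a * γ) + u) (ea' : γ * a' = -(a' * γ) - u)
    (eb : γ * b = -(b * γ)) (eb' : γ * b' = -(b' * γ)) :
    γ * (b' * a + a' * b + (a * b + b' * a')) =
      (b' * a + a' * b + (a * b + b' * a')) * γ := by
  have h1 : γ * (b' * a) = b' * (a * γ) - b' * u := by
    rw [← mul_assoc, eb', neg_mul, mul_assoc, ea]; noncomm_ring
  have h2 : γ * (a' * b) = a' * (b * γ) - u * b := by
    rw [← mul_assoc, ea', sub_mul, neg_mul, mul_assoc, eb]; noncomm_ring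
  have h3 : γ * (a * b) = a * (b * γ) + u * b := by
    rw [← mul_assoc, ea, add_mul, neg_mul, mul_assoc, eb]; noncomm_ring
  have h4 : γ * (b' * a') = b' * (a' * γ) + b' * u := by
    rw [← mul_assoc, eb', neg_mul, mul_assoc, ea']; noncomm_ring
  rw [mul_add, mul_add, mul_add, h1, h2, h3, h4]; noncomm_ring

lemma four_comm₂ (γ a a' b b' u : A) (hub : u * b = b * u) (hub' : u * b' = b' * u)
    (ea : γ * a = -(a * γ) + u) (ea' : γ * a' = -(a' * γ) + u)
    (eb : γ * b = -(b * γ)) (eb' : γ * b' = -(b' * γ)) :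
    γ * (a' * b + b' * a + (b * a + a' * b')) =
      (a' * b + b' * a + (b * a + a' * b')) * γ := by
  have h1 : γ * (a' * b) = a' * (b * γ) + b * u := by
    rw [← mul_assoc, ea', add_mul, hub, neg_mul, mul_assoc, eb]; noncomm_ring
  have h2 : γ * (b' * a) = b' * (a * γ) - b' * u := by
    rw [← mul_assoc, eb', neg_mul, mul_assoc, ea]; noncomm_ring
  have h3 : γ * (b * a) = b * (a * γ) - b * u := by
    rw [← mul_assoc, eb, neg_mul, mul_assoc, ea]; noncomm_ring
  have h4 : γ * (a' * b') = a' * (b' * γ) + b' * u := by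
    rw [← mul_assoc, ea', add_mul, hub', neg_mul, mul_assoc, eb']; noncomm_ring
  rw [mul_add, mul_add, mul_add, h1, h2, h3, h4]; noncomm_ring

end

/-- The Majorana operators attached to a family of annihilation operators `c`:
`majorana c j 0 = γ_{j,1} = c j + (c j)†` and
`majorana c j 1 = γ_{j,2} = i • (c j - (c j)†)`. -/
noncomputable def majorana {A : Type*} [Ring A] [Algebra ℂ A] [StarRing A]
    [StarModule ℂ A] {n : ℕ} (c : Fin n → A) (j : Fin n) : Fin 2 → A :=
  ![c j + star (c j), Complex.I • (c j - star (c j))]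

/-- For the Kitaev chain at `μ = 0`, `Δ = -t`, the two edge Majorana operators
`γ_{0,2}` and `γ_{n-1,1}` commute with the Hamiltonian: the unpaired Majorana zero modes
of the 1d p-wave topological superconductor. -/
theorem edge_majorana_zero_modes {A : Type*} [Ring A] [Algebra ℂ A]
    [StarRing A] [StarModule ℂ A] {n : ℕ} (hn : 2 ≤ n) (c : Fin n → A)
    (hcc : ∀ j k, c j * c k + c k * c j = 0)
    (hcs : ∀ j k, c j * star (c k) + star (c k) * c j = if j = k then 1 else 0)
    (t : ℂ) (H : A)
    (hH : H = (-t) • ∑ j ∈ (Finset.range (n - 1)).attach,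
            (star (c ⟨j.1 + 1, by have := Finset.mem_range.mp j.2; omega⟩) *
              c ⟨j.1, by have := Finset.mem_range.mp j.2; omega⟩ +
             star (c ⟨j.1, by have := Finset.mem_range.mp j.2; omega⟩) *
              c ⟨j.1 + 1, by have := Finset.mem_range.mp j.2; omega⟩)
        - t • ∑ j ∈ (Finset.range (n - 1)).attach,
            (c ⟨j.1, by have := Finset.mem_range.mp j.2; omega⟩ *
              c ⟨j.1 + 1, by have := Finset.mem_range.mp j.2; omega⟩ +
             star (c ⟨j.1 + 1, by have := Finset.mem_range.mp j.2; omega⟩) *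
              star (c ⟨j.1, by have := Finset.mem_range.mp j.2; omega⟩))) :
    majorana c ⟨0, by omega⟩ 1 * H = H * majorana c ⟨0, by omega⟩ 1 ∧
    majorana c ⟨n - 1, by omega⟩ 0 * H = H * majorana c ⟨n - 1, by omega⟩ 0 := by
  have h0 : 0 < n := by omega
  have hN : n - 1 < n := by omega
  -- basic consequences of the CAR
  have sq : ∀ p : Fin n, c p * c p = 0 := by
    intro p
    have h2 : (2 : ℂ) • (c p * c p) = 0 := by rw [two_smul]; exact hcc p p
    have := congrArg (fun z => (2 : ℂ)⁻¹ • z) h2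
    simpa [smul_smul] using this
  have sqs : ∀ p : Fin n, star (c p) * star (c p) = 0 := by
    intro p
    have := congrArg star (sq p)
    simpa [star_mul] using this
  have A1 : ∀ p q : Fin n, c p * c q = -(c q * c p) := fun p q =>
    eq_neg_of_add_eq_zero_left (hcc p q)
  have A4 : ∀ p q : Fin n, star (c p) * star (c q) = -(star (c q) * star (c p)) := by
    intro p q
    refine eq_neg_of_add_eq_zero_left ?_
    have := congrArg star (hcc q p)
    simpa [star_mul] using this
  have A2 : ∀ p q : Fin n, p ≠ q → c p * star (c q) = -(star (c q) * c p) := by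
    intro p q h
    refine eq_neg_of_add_eq_zero_left ?_
    simpa [h] using hcs p q
  have A3 : ∀ p q : Fin n, p ≠ q → star (c p) * c q = -(c q * star (c p)) := by
    intro p q h
    refine eq_neg_of_add_eq_zero_left ?_
    have h' := hcs q p
    rw [if_neg (Ne.symm h)] at h'
    rw [add_comm]; exact h'
  have diag : ∀ p : Fin n, star (c p) * c p = 1 - c p * star (c p) := by
    intro p
    have h' := hcs p p
    rw [if_pos rfl] at h'
    linear_combination (norm := noncomm_ring) h'
  -- relations for γ₂ = I • (c 0 - (c 0)†)
  have g2c : ∀ k : Fin n, k ≠ ⟨0, h0⟩ →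
      (Complex.I • (c ⟨0, h0⟩ - star (c ⟨0, h0⟩))) * c k
        = -(c k * (Complex.I • (c ⟨0, h0⟩ - star (c ⟨0, h0⟩)))) := by
    intro k hk
    have h : (c ⟨0, h0⟩ - star (c ⟨0, h0⟩)) * c k
        = -(c k * (c ⟨0, h0⟩ - star (c ⟨0, h0⟩))) := by
      rw [sub_mul, mul_sub, A1 ⟨0, h0⟩ k, A3 ⟨0, h0⟩ k (Ne.symm hk)]; abel
    rw [smul_mul_assoc, h, smul_neg, mul_smul_comm]
  have g2cs : ∀ k : Fin n, k ≠ ⟨0, h0⟩ →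
      (Complex.I • (c ⟨0, h0⟩ - star (c ⟨0, h0⟩))) * star (c k)
        = -(star (c k) * (Complex.I • (c ⟨0, h0⟩ - star (c ⟨0, h0⟩)))) := by
    intro k hk
    have h : (c ⟨0, h0⟩ - star (c ⟨0, h0⟩)) * star (c k)
        = -(star (c k) * (c ⟨0, h0⟩ - star (c ⟨0, h0⟩))) := by
      rw [sub_mul, mul_sub, A2 ⟨0, h0⟩ k (Ne.symm hk), A4 ⟨0, h0⟩ k]; abel
    rw [smul_mul_assoc, h, smul_neg, mul_smul_comm]
  have g2c0 : (Complex.I • (c ⟨0, h0⟩ - star (c ⟨0, h0⟩))) * c ⟨0, h0⟩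
      = -(c ⟨0, h0⟩ * (Complex.I • (c ⟨0, h0⟩ - star (c ⟨0, h0⟩))))
        + (-(Complex.I • (1 : A))) := by
    have h : (c ⟨0, h0⟩ - star (c ⟨0, h0⟩)) * c ⟨0, h0⟩
        = -(c ⟨0, h0⟩ * (c ⟨0, h0⟩ - star (c ⟨0, h0⟩))) + (-(1 : A)) := by
      rw [sub_mul, mul_sub, sq ⟨0, h0⟩, diag ⟨0, h0⟩]; abel
    rw [smul_mul_assoc, h, smul_add, smul_neg, smul_neg, mul_smul_comm]
  have g2c0s : (Complex.I • (c ⟨0, h0⟩ - star (c ⟨0, h0⟩))) * star (c ⟨0, h0⟩)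
      = -(star (c ⟨0, h0⟩) * (Complex.I • (c ⟨0, h0⟩ - star (c ⟨0, h0⟩))))
        - (-(Complex.I • (1 : A))) := by
    have h : (c ⟨0, h0⟩ - star (c ⟨0, h0⟩)) * star (c ⟨0, h0⟩)
        = -(star (c ⟨0, h0⟩) * (c ⟨0, h0⟩ - star (c ⟨0, h0⟩))) + (1 : A) := by
      rw [sub_mul, mul_sub, sqs ⟨0, h0⟩, diag ⟨0, h0⟩]; abel
    rw [smul_mul_assoc, h, smul_add, smul_neg, mul_smul_comm]
    abel
  -- relations for γ₁ = c (n-1) + (c (n-1))†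
  have g1c : ∀ k : Fin n, k ≠ ⟨n - 1, hN⟩ →
      (c ⟨n - 1, hN⟩ + star (c ⟨n - 1, hN⟩)) * c k
        = -(c k * (c ⟨n - 1, hN⟩ + star (c ⟨n - 1, hN⟩))) := by
    intro k hk
    rw [add_mul, mul_add, A1 ⟨n - 1, hN⟩ k, A3 ⟨n - 1, hN⟩ k (Ne.symm hk)]; abel
  have g1cs : ∀ k : Fin n, k ≠ ⟨n - 1, hN⟩ →
      (c ⟨n - 1, hN⟩ + star (c ⟨n - 1, hN⟩)) * star (c k)
        = -(star (c k) * (c ⟨n - 1, hN⟩ + star (c ⟨n - 1, hN⟩))) := by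
    intro k hk
    rw [add_mul, mul_add, A2 ⟨n - 1, hN⟩ k (Ne.symm hk), A4 ⟨n - 1, hN⟩ k]; abel
  have g1cN : (c ⟨n - 1, hN⟩ + star (c ⟨n - 1, hN⟩)) * c ⟨n - 1, hN⟩
      = -(c ⟨n - 1, hN⟩ * (c ⟨n - 1, hN⟩ + star (c ⟨n - 1, hN⟩))) + (1 : A) := by
    rw [add_mul, mul_add, sq ⟨n - 1, hN⟩, diag ⟨n - 1, hN⟩]; abel
  have g1cNs : (c ⟨n - 1, hN⟩ + star (c ⟨n - 1, hN⟩)) * star (c ⟨n - 1, hN⟩)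
      = -(star (c ⟨n - 1, hN⟩) * (c ⟨n - 1, hN⟩ + star (c ⟨n - 1, hN⟩))) + (1 : A) := by
    rw [add_mul, mul_add, sqs ⟨n - 1, hN⟩, diag ⟨n - 1, hN⟩]; abel
  -- rewrite H as a single sum
  have hH2 : H = (-t) • ∑ j ∈ (Finset.range (n - 1)).attach,
      ((star (c ⟨j.1 + 1, by have := Finset.mem_range.mp j.2; omega⟩) *
          c ⟨j.1, by have := Finset.mem_range.mp j.2; omega⟩ +
        star (c ⟨j.1, by have := Finset.mem_range.mp j.2; omega⟩) *
          c ⟨j.1 + 1, by have := Finset.mem_range.mp j.2; omega⟩) +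
       (c ⟨j.1, by have := Finset.mem_range.mp j.2; omega⟩ *
          c ⟨j.1 + 1, by have := Finset.mem_range.mp j.2; omega⟩ +
        star (c ⟨j.1 + 1, by have := Finset.mem_range.mp j.2; omega⟩) *
          star (c ⟨j.1, by have := Finset.mem_range.mp j.2; omega⟩))) := by
    rw [hH]
    conv_rhs => rw [Finset.sum_add_distrib]
    rw [smul_add, sub_eq_add_neg, ← neg_smul]
  have key : ∀ γ : A,
      (∀ x ∈ (Finset.range (n - 1)).attach,
        γ * ((star (c ⟨x.1 + 1, by have := Finset.mem_range.mp x.2; omega⟩) *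
              c ⟨x.1, by have := Finset.mem_range.mp x.2; omega⟩ +
            star (c ⟨x.1, by have := Finset.mem_range.mp x.2; omega⟩) *
              c ⟨x.1 + 1, by have := Finset.mem_range.mp x.2; omega⟩) +
           (c ⟨x.1, by have := Finset.mem_range.mp x.2; omega⟩ *
              c ⟨x.1 + 1, by have := Finset.mem_range.mp x.2; omega⟩ +
            star (c ⟨x.1 + 1, by have := Finset.mem_range.mp x.2; omega⟩) *
              star (c ⟨x.1, by have := Finset.mem_range.mp x.2; omega⟩)))
          = ((star (c ⟨x.1 + 1, by have := Finset.mem_range.mp x.2; omega⟩) *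
              c ⟨x.1, by have := Finset.mem_range.mp x.2; omega⟩ +
            star (c ⟨x.1, by have := Finset.mem_range.mp x.2; omega⟩) *
              c ⟨x.1 + 1, by have := Finset.mem_range.mp x.2; omega⟩) +
           (c ⟨x.1, by have := Finset.mem_range.mp x.2; omega⟩ *
              c ⟨x.1 + 1, by have := Finset.mem_range.mp x.2; omega⟩ +
            star (c ⟨x.1 + 1, by have := Finset.mem_range.mp x.2; omega⟩) *
              star (c ⟨x.1, by have := Finset.mem_range.mp x.2; omega⟩))) * γ) →
      γ * H = H * γ := by
    intro γ hγ
    rw [hH2, mul_smul_comm, smul_mul_assoc, Finset.mul_sum, Finset.sum_mul]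
    congr 1
    exact Finset.sum_congr rfl hγ
  simp only [majorana, Matrix.cons_val_one, Matrix.head_cons, Matrix.cons_val_zero]
  constructor
  · refine key _ ?_
    intro x _
    have hjlt := Finset.mem_range.mp x.2
    rcases Nat.eq_zero_or_pos x.1 with hx0 | hxpos
    · have e0 : (⟨x.1, by omega⟩ : Fin n) = ⟨0, h0⟩ := Fin.ext hx0
      rw [e0]
      exact four_comm₁ _ (c ⟨0, h0⟩) (star (c ⟨0, h0⟩))
        (c ⟨x.1 + 1, by omega⟩) (star (c ⟨x.1 + 1, by omega⟩)) (-(Complex.I • (1 : A)))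
        g2c0 g2c0s
        (g2c ⟨x.1 + 1, by omega⟩ (Fin.ne_of_val_ne (show x.1 + 1 ≠ 0 by omega)))
        (g2cs ⟨x.1 + 1, by omega⟩ (Fin.ne_of_val_ne (show x.1 + 1 ≠ 0 by omega)))
    · exact four_comm₁ _ (c ⟨x.1, by omega⟩) (star (c ⟨x.1, by omega⟩))
        (c ⟨x.1 + 1, by omega⟩) (star (c ⟨x.1 + 1, by omega⟩)) 0
        ((g2c ⟨x.1, by omega⟩ (Fin.ne_of_val_ne (show x.1 ≠ 0 by omega))).trans
          (add_zero _).symm)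
        ((g2cs ⟨x.1, by omega⟩ (Fin.ne_of_val_ne (show x.1 ≠ 0 by omega))).trans
          (sub_zero _).symm)
        (g2c ⟨x.1 + 1, by omega⟩ (Fin.ne_of_val_ne (show x.1 + 1 ≠ 0 by omega)))
        (g2cs ⟨x.1 + 1, by omega⟩ (Fin.ne_of_val_ne (show x.1 + 1 ≠ 0 by omega)))
  · refine key _ ?_
    intro x _
    have hjlt := Finset.mem_range.mp x.2
    by_cases hj2 : x.1 + 1 = n - 1
    · have e : (⟨x.1 + 1, by omega⟩ : Fin n) = ⟨n - 1, hN⟩ := Fin.ext hj2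
      rw [e]
      exact four_comm₂ _ (c ⟨n - 1, hN⟩) (star (c ⟨n - 1, hN⟩))
        (c ⟨x.1, by omega⟩) (star (c ⟨x.1, by omega⟩)) 1
        (by rw [one_mul, mul_one]) (by rw [one_mul, mul_one])
        g1cN g1cNs
        (g1c ⟨x.1, by omega⟩ (Fin.ne_of_val_ne (show x.1 ≠ n - 1 by omega)))
        (g1cs ⟨x.1, by omega⟩ (Fin.ne_of_val_ne (show x.1 ≠ n - 1 by omega)))
    · exact four_comm₁ _ (c ⟨x.1, by omega⟩) (star (c ⟨x.1, by omega⟩))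
        (c ⟨x.1 + 1, by omega⟩) (star (c ⟨x.1 + 1, by omega⟩)) 0
        ((g1c ⟨x.1, by omega⟩ (Fin.ne_of_val_ne (show x.1 ≠ n - 1 by omega))).trans
          (add_zero _).symm)
        ((g1cs ⟨x.1, by omega⟩ (Fin.ne_of_val_ne (show x.1 ≠ n - 1 by omega))).trans
          (sub_zero _).symm)
        (g1c ⟨x.1 + 1, by omega⟩ (Fin.ne_of_val_ne (show x.1 + 1 ≠ n - 1 by omega)))
        (g1cs ⟨x.1 + 1, by omega⟩ (Fin.ne_of_val_ne (show x.1 + 1 ≠ n - 1 by omega)))
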